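/- arXiv:1512.04041 — 2 statements merged into one kernel-verified Lean document; each statement's English description precedes it below -/
import Mathlib

section
/- Let α be a quadratic element of the algebraic closure of F_q(T) (i.e., algebraic of degree 2 over F_q(T)) and let α' be its Galois conjugate. If α ≠ α', then H(α)^{−1} ≤ |α − α'| ≤ H(α). -/
open Polynomial Filter
open scoped ENNReal

noncomputable section

namespace Ooto

variable (Fq : Type) [Field Fq] [Fintype Fq]

/-- `F_q((T⁻¹))`, realized as formal Laurent series in the variable `X = T⁻¹`. -/
abbrev K := LaurentSeries Fq

/-- The element `T = X⁻¹` of `F_q((T⁻¹))`. -/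
def TT : K Fq := HahnSeries.single (-1 : ℤ) (1 : Fq)

/-- The natural embedding of `F_q[T]` into `F_q((T⁻¹))`, sending `T` to `T`. -/
def polyToK : Polynomial Fq →+* K Fq := Polynomial.eval₂RingHom HahnSeries.C (TT Fq)

open Classical in
/-- The absolute value on `F_q((T⁻¹))`: `|0| = 0` and `|ξ| = q^{-N}` where `N` is the order
of `ξ` as a series in `T⁻¹`. -/
def kabs (f : K Fq) : ℝ := if f = 0 then 0 else (Fintype.card Fq : ℝ) ^ (-f.order)

/-- A fixed algebraic closure of `F_q((T⁻¹))`. -/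
abbrev L := AlgebraicClosure (K Fq)

def toL : K Fq →+* L Fq := algebraMap (K Fq) (L Fq)

def φ : Polynomial Fq →+* L Fq := (toL Fq).comp (polyToK Fq)

/-- Evaluation of `P ∈ (F_q[T])[X]` at `ξ ∈ F_q((T⁻¹))`. -/
def evalK (P : Polynomial (Polynomial Fq)) (ξ : K Fq) : K Fq :=
  Polynomial.eval₂ (polyToK Fq) ξ P

/-- Evaluation of `P ∈ (F_q[T])[X]` at a point of the algebraic closure. -/
def evalL (P : Polynomial (Polynomial Fq)) (α : L Fq) : L Fq :=
  Polynomial.eval₂ (φ Fq) α P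

/-- Height of a polynomial over `F_q[T]`: the maximum of the absolute values of its
coefficients. -/
def Hpoly (P : Polynomial (Polynomial Fq)) : ℝ := ⨆ i : ℕ, kabs Fq (polyToK Fq (P.coeff i))

/-- `P` is the minimal polynomial of `α`: a non-constant irreducible primitive polynomial in
`(F_q[T])[X]` whose leading coefficient is monic in `T`, vanishing at `α`. -/
def IsMinPolyOf (P : Polynomial (Polynomial Fq)) (α : L Fq) : Prop :=
  0 < P.natDegree ∧ Irreducible P ∧ P.IsPrimitive ∧ (P.leadingCoeff).Monic ∧ evalL Fq P α = 0

/-- `α` is algebraic over `F_q(T)`. -/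
def IsAlgElem (α : L Fq) : Prop := ∃ P, IsMinPolyOf Fq P α

open Classical in
/-- The minimal polynomial of an algebraic element (junk value `0` otherwise). -/
def minPolyPrim (α : L Fq) : Polynomial (Polynomial Fq) :=
  if h : IsAlgElem Fq α then h.choose else 0

/-- Degree of an algebraic element. -/
def degAlg (α : L Fq) : ℕ := (minPolyPrim Fq α).natDegree

/-- Height of an algebraic element. -/
def heightAlg (α : L Fq) : ℝ := Hpoly Fq (minPolyPrim Fq α)

/-- Inseparable degree of a polynomial `P ∈ (F_q[T])[X]`: the largest power `f = p^j` of the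
characteristic such that `P(X) = R(X^f)` for some `R`. -/
def insepDeg (P : Polynomial (Polynomial Fq)) : ℕ :=
  (ringChar Fq) ^ sSup {j : ℕ | ∃ R : Polynomial (Polynomial Fq),
    P = R.comp (Polynomial.X ^ (ringChar Fq) ^ j)}

/-- Inseparable degree of an algebraic element. -/
def insepAlg (α : L Fq) : ℕ := insepDeg Fq (minPolyPrim Fq α)

/-- `α'` is the Galois conjugate of the quadratic element `α` (equal to `α` itself in the
inseparable case): the minimal polynomial of `α` factors as `A(X - α)(X - α')`. -/
def IsConjOf (α' α : L Fq) : Prop :=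
  (minPolyPrim Fq α).natDegree = 2 ∧
  (minPolyPrim Fq α).map (φ Fq) =
    Polynomial.C (φ Fq (minPolyPrim Fq α).leadingCoeff) *
      (Polynomial.X - Polynomial.C α) * (Polynomial.X - Polynomial.C α')

/-- `v` is an absolute value on the algebraic closure of `F_q((T⁻¹))` extending `kabs`
(such an extension exists and is unique). -/
structure IsAbsExt (v : L Fq → ℝ) : Prop where
  eq_zero_iff : ∀ x, v x = 0 ↔ x = 0
  map_mul : ∀ x y, v (x * y) = v x * v y
  add_le : ∀ x y, v (x + y) ≤ max (v x) (v y)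
  nonneg : ∀ x, 0 ≤ v x
  extends_kabs : ∀ f : K Fq, v (toL Fq f) = kabs Fq f

/-- The exponent `w_n(ξ)`: the supremum of the real numbers `w` such that
`0 < |P(ξ)| ≤ H(P)^{-w}` for infinitely many `P ∈ (F_q[T])[X]` of degree at most `n`. -/
def wExp (n : ℕ) (ξ : K Fq) : EReal :=
  sSup {x : EReal | ∃ w : ℝ, x = (w : EReal) ∧
    {P : Polynomial (Polynomial Fq) | P.natDegree ≤ n ∧ 0 < kabs Fq (evalK Fq P ξ) ∧
      kabs Fq (evalK Fq P ξ) ≤ Hpoly Fq P ^ (-w)}.Infinite}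

/-- The exponent `w_n^*(ξ)`: the supremum of the real numbers `w` such that
`0 < |ξ - α| ≤ H(α)^{-w-1}` for infinitely many algebraic `α` of degree at most `n`. -/
def wStarExp (v : L Fq → ℝ) (n : ℕ) (ξ : K Fq) : EReal :=
  sSup {x : EReal | ∃ w : ℝ, x = (w : EReal) ∧
    {α : L Fq | IsAlgElem Fq α ∧ degAlg Fq α ≤ n ∧ 0 < v (toL Fq ξ - α) ∧
      v (toL Fq ξ - α) ≤ heightAlg Fq α ^ (-w - 1)}.Infinite}

/-- `pSeq a n = p_{n-1}`, the numerators of the convergents of `[a 0; a 1, a 2, …]`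
(with `p_{-1} = 1`). -/
def pSeq (a : ℕ → Polynomial Fq) : ℕ → Polynomial Fq
  | 0 => 1
  | 1 => a 0
  | (n+2) => a (n+1) * pSeq a (n+1) + pSeq a n

/-- `qSeq a n = q_{n-1}`, the denominators of the convergents of `[a 0; a 1, a 2, …]`
(with `q_{-1} = 0`). -/
def qSeq (a : ℕ → Polynomial Fq) : ℕ → Polynomial Fq
  | 0 => 0
  | 1 => 1
  | (n+2) => a (n+1) * qSeq a (n+1) + qSeq a n

/-- `ξ` has continued fraction expansion `[a 0; a 1, a 2, …]`: each partial quotient `a n`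
(`n ≥ 1`) has degree at least one and `|ξ - p_n/q_n| = |q_n|⁻¹|q_{n+1}|⁻¹` for all `n ≥ 0`. -/
def IsCFOf (ξ : K Fq) (a : ℕ → Polynomial Fq) : Prop :=
  (∀ n, 1 ≤ n → 1 ≤ (a n).natDegree) ∧
  ∀ n : ℕ,
    kabs Fq (ξ - polyToK Fq (pSeq Fq a (n+1)) / polyToK Fq (qSeq Fq a (n+1))) =
      (kabs Fq (polyToK Fq (qSeq Fq a (n+1))) * kabs Fq (polyToK Fq (qSeq Fq a (n+2))))⁻¹

/-- The sequence of partial quotients of `[0; b 0, b 1, b 2, …]`. -/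
def cfA (b : ℕ → Polynomial Fq) : ℕ → Polynomial Fq := fun n => if n = 0 then 0 else b (n - 1)

/-- `qden b n` is the denominator `q_n` of the `n`-th convergent of `[0; b 0, b 1, …]`. -/
def qden (b : ℕ → Polynomial Fq) (n : ℕ) : Polynomial Fq := qSeq Fq (cfA Fq b) (n + 1)

/-- `V^w` for a finite word `V` and a real `w ≥ 0`: `⌊w⌋` copies of `V` followed by the prefix
of `V` of length `⌈(w - ⌊w⌋)|V|⌉`. -/
def wordPow {A : Type*} (V : List A) (w : ℝ) : List A :=
  (List.replicate ⌊w⌋₊ V).flatten ++ V.take ⌈(w - ⌊w⌋₊) * V.length⌉₊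

/-- The finite word `l` is a prefix of the infinite word `b`. -/
def IsPrefixOfSeq {A : Type*} (l : List A) (b : ℕ → A) : Prop :=
  ∀ (i : ℕ) (h : i < l.length), l.get ⟨i, h⟩ = b i

/-- Condition `(*)_ρ` for an infinite word. -/
def SatisfiesCond {A : Type*} (b : ℕ → A) (ρ : ℝ) : Prop :=
  ∃ (U V : ℕ → List A) (w : ℕ → ℝ),
    (∀ n, V n ≠ []) ∧ (∀ n, 0 ≤ w n) ∧
    (∀ n, IsPrefixOfSeq (U n ++ wordPow (V n) (w n)) b) ∧
    (∀ n, ρ * (((U n).length + (V n).length : ℕ) : ℝ) ≤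
      (((U n).length + (wordPow (V n) (w n)).length : ℕ) : ℝ)) ∧
    StrictMono fun n => (wordPow (V n) (w n)).length

/-- The Diophantine exponent of an infinite word: the supremum of the `ρ` such that the word
satisfies Condition `(*)_ρ`. -/
def dioExp {A : Type*} (b : ℕ → A) : EReal :=
  sSup {x : EReal | ∃ ρ : ℝ, x = (ρ : EReal) ∧ SatisfiesCond b ρ}

/-- The complexity function: the number of distinct blocks of `n` consecutive letters. -/
def complexity {A : Type*} (b : ℕ → A) (n : ℕ) : ℕ∞ :=
  {w : Fin n → A | ∃ i : ℕ, ∀ k : Fin n, w k = b (i + k)}.encard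

/-- The infinite word `b` is ultimately periodic. -/
def UltimatelyPeriodic {A : Type*} (b : ℕ → A) : Prop :=
  ∃ N T : ℕ, 0 < T ∧ ∀ n, N ≤ n → b (n + T) = b n

/-!
Write `P = aX² + bX + c` for the minimal polynomial of `α`, so that `P = a(X - α)(X - α')`.
The discriminant `b² - 4ac = (a(α - α'))²` is a nonzero polynomial in `T`, so its absolute
value is at least `1`, and by the ultrametric inequality it is at most `H(α)²`. Since also
`1 ≤ |a| ≤ H(α)`, dividing by `|a|` gives both bounds.
-/

end Ooto

theorem map_discrim {F R S : Type*} [Ring R] [Ring S] [FunLike F R S] [RingHomClass F R S]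
    (f : F) (a b c : R) : f (discrim a b c) = discrim (f a) (f b) (f c) := by
  simp only [discrim, map_sub, map_mul, map_pow, map_ofNat]

theorem map_discrim_coeff_eq_sq {R S : Type*} [CommRing R] [CommRing S] (f : R →+* S)
    {P : R[X]} {A α β : S} (h : P.map f = C A * (X - C α) * (X - C β)) :
    f (discrim (P.coeff 2) (P.coeff 1) (P.coeff 0)) = (A * (α - β)) ^ 2 := by
  have hexpand : C A * (X - C α) * (X - C β) =
      C A * X ^ 2 + C (-(A * (α + β))) * X + C (A * (α * β)) := by
    simp only [map_neg, map_mul, map_add]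
    ring
  simp only [map_discrim, ← coeff_map, h, hexpand]
  simp only [discrim, coeff_add, coeff_C_mul, coeff_X_pow, coeff_X, coeff_C]
  norm_num
  ring

theorem IsNonarchimedean.discrim_le_sq {S : Type*} [CommRing S] [IsDomain S]
    {v : AbsoluteValue S ℝ} (hv : IsNonarchimedean v) {a b c : S} {H : ℝ}
    (ha : v a ≤ H) (hb : v b ≤ H) (hc : v c ≤ H) : v (discrim a b c) ≤ H ^ 2 := by
  have h4 : v 4 ≤ 1 := by exact_mod_cast hv.apply_natCast_le_one (n := 4)
  have hH : 0 ≤ H := (v.nonneg b).trans hb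
  calc v (b ^ 2 - 4 * a * c) ≤ max (v (b ^ 2)) (v (4 * a * c)) := by
        simpa only [sub_eq_add_neg, map_neg_eq_map] using hv (b ^ 2) (-(4 * a * c))
    _ ≤ H ^ 2 := by
        refine max_le ?_ ?_
        · rw [map_pow]; gcongr
        · rw [map_mul, map_mul, sq]
          calc v 4 * v a * v c ≤ 1 * H * H := by gcongr
            _ = H * H := by ring

theorem inv_le_and_le_of_sq_mul_mem_Icc {x y H : ℝ} (hx : 1 ≤ x) (hxH : x ≤ H) (hy : 0 ≤ y)
    (h : (x * y) ^ 2 ∈ Set.Icc 1 (H ^ 2)) : H⁻¹ ≤ y ∧ y ≤ H := by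
  have hxy : 0 ≤ x * y := by positivity
  have hlow : 1 ≤ x * y := by nlinarith [h.1]
  have hup : x * y ≤ H := abs_le_of_sq_le_sq' h.2 (by linarith) |>.2
  constructor
  · rw [inv_le_iff_one_le_mul₀ (by linarith)]
    nlinarith
  · nlinarith

namespace Ooto

section

variable {Fq : Type} [Field Fq]

theorem TT_pow (n : ℕ) : TT Fq ^ n = HahnSeries.single (-(n : ℤ)) 1 := by
  rw [TT, HahnSeries.single_pow, one_pow, nsmul_eq_mul, mul_neg, mul_one]

theorem coeff_polyToK (Q : Fq[X]) (m : ℤ) :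
    (polyToK Fq Q).coeff m = if 0 ≤ -m then Q.coeff (-m).toNat else 0 := by
  rw [polyToK, coe_eval₂RingHom, eval₂_eq_sum, Polynomial.sum,
    ← HahnSeries.coeff.addMonoidHom_apply, map_sum]
  simp only [HahnSeries.coeff.addMonoidHom_apply, TT_pow, HahnSeries.C_apply,
    HahnSeries.single_mul_single, zero_add, mul_one, HahnSeries.coeff_single]
  split_ifs with hm
  · have hiff (n : ℕ) : m = -(n : ℤ) ↔ n = (-m).toNat := by omega
    simp only [hiff, Finset.sum_ite_eq']
    exact ite_eq_left_iff.mpr fun h => (notMem_support_iff.mp h).symm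
  · exact Finset.sum_eq_zero fun n _ => if_neg (by omega)

theorem polyToK_ne_zero {Q : Fq[X]} (hQ : Q ≠ 0) : polyToK Fq Q ≠ 0 := by
  intro h
  have hco := coeff_polyToK Q (-(Q.natDegree : ℤ))
  simp only [h, HahnSeries.coeff_zero, neg_neg, Int.toNat_natCast, Nat.cast_nonneg,
    if_true] at hco
  exact leadingCoeff_ne_zero.mpr hQ hco.symm

theorem polyToK_injective : Function.Injective (polyToK Fq) :=
  (injective_iff_map_eq_zero _).mpr fun _ h => by_contra fun hQ => polyToK_ne_zero hQ h

theorem φ_injective : Function.Injective (φ Fq) :=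
  (toL Fq).injective.comp polyToK_injective

theorem order_polyToK {Q : Fq[X]} (hQ : Q ≠ 0) : (polyToK Fq Q).order = -(Q.natDegree : ℤ) := by
  apply le_antisymm
  · apply HahnSeries.order_le_of_coeff_ne_zero
    simpa [coeff_polyToK] using leadingCoeff_ne_zero.mpr hQ
  · by_contra! hlt
    have hne := HahnSeries.coeff_order_eq_zero.not.mpr (polyToK_ne_zero hQ)
    rw [coeff_polyToK] at hne
    split_ifs at hne
    · exact hne (coeff_eq_zero_of_natDegree_lt (by omega))
    · exact hne rfl

theorem IsAlgElem.isMinPolyOf_minPolyPrim {α : L Fq} (h : IsAlgElem Fq α) :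
    IsMinPolyOf Fq (minPolyPrim Fq α) α := by
  rw [minPolyPrim, dif_pos h]
  exact h.choose_spec

variable [Fintype Fq]

theorem kabs_polyToK {Q : Fq[X]} (hQ : Q ≠ 0) :
    kabs Fq (polyToK Fq Q) = (Fintype.card Fq : ℝ) ^ Q.natDegree := by
  rw [kabs, if_neg (polyToK_ne_zero hQ), order_polyToK hQ, neg_neg, zpow_natCast]

theorem one_le_kabs_polyToK {Q : Fq[X]} (hQ : Q ≠ 0) : 1 ≤ kabs Fq (polyToK Fq Q) := by
  rw [kabs_polyToK hQ]
  exact one_le_pow₀ (by exact_mod_cast Fintype.card_pos)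

theorem kabs_polyToK_coeff_le_Hpoly (P : Fq[X][X]) (i : ℕ) :
    kabs Fq (polyToK Fq (P.coeff i)) ≤ Hpoly Fq P := by
  refine le_ciSup (f := fun j => kabs Fq (polyToK Fq (P.coeff j)))
    ⟨∑ j ∈ Finset.range (P.natDegree + 1), kabs Fq (polyToK Fq (P.coeff j)), ?_⟩ i
  rintro _ ⟨j, rfl⟩
  dsimp only
  have hnonneg (k : ℕ) : 0 ≤ kabs Fq (polyToK Fq (P.coeff k)) := by
    unfold kabs; split_ifs <;> positivity
  by_cases hj : j ≤ P.natDegree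
  · exact Finset.single_le_sum (fun k _ => hnonneg k) (Finset.mem_range.mpr (by omega))
  · rw [coeff_eq_zero_of_natDegree_lt (by omega), map_zero, kabs, if_pos rfl]
    exact Finset.sum_nonneg fun k _ => hnonneg k

def IsAbsExt.toAbsoluteValue {v : L Fq → ℝ} (hv : IsAbsExt Fq v) : AbsoluteValue (L Fq) ℝ where
  toFun := v
  map_mul' := hv.map_mul
  nonneg' := hv.nonneg
  eq_zero' := hv.eq_zero_iff
  add_le' x y := (hv.add_le x y).trans (max_le_add_of_nonneg (hv.nonneg x) (hv.nonneg y))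

theorem IsAbsExt.isNonarchimedean {v : L Fq → ℝ} (hv : IsAbsExt Fq v) :
    IsNonarchimedean hv.toAbsoluteValue :=
  hv.add_le

theorem IsAbsExt.apply_φ {v : L Fq → ℝ} (hv : IsAbsExt Fq v) (Q : Fq[X]) :
    v (φ Fq Q) = kabs Fq (polyToK Fq Q) :=
  hv.extends_kabs (polyToK Fq Q)

theorem IsAbsExt.apply_φ_discrim_le_sq {v : L Fq → ℝ} (hv : IsAbsExt Fq v) (P : Fq[X][X]) :
    v (φ Fq (discrim (P.coeff 2) (P.coeff 1) (P.coeff 0))) ≤ Hpoly Fq P ^ 2 := by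
  have hcoeff (i : ℕ) : hv.toAbsoluteValue (φ Fq (P.coeff i)) ≤ Hpoly Fq P :=
    (hv.apply_φ _).trans_le (kabs_polyToK_coeff_le_Hpoly P i)
  rw [map_discrim]
  exact hv.isNonarchimedean.discrim_le_sq (hcoeff 2) (hcoeff 1) (hcoeff 0)

end

theorem stmt9 (Fq : Type) [Field Fq] [Fintype Fq]
    (v : L Fq → ℝ) (hv : IsAbsExt Fq v)
    (α α' : L Fq) (halg : IsAlgElem Fq α) (hconj : IsConjOf Fq α' α) (hne : α ≠ α') :
    (heightAlg Fq α)⁻¹ ≤ v (α - α') ∧ v (α - α') ≤ heightAlg Fq α := by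
  obtain ⟨-, hmap⟩ := hconj
  obtain ⟨-, -, -, hmonic, -⟩ := halg.isMinPolyOf_minPolyPrim
  set P := minPolyPrim Fq α
  set A := φ Fq P.leadingCoeff
  set D := discrim (P.coeff 2) (P.coeff 1) (P.coeff 0)
  have hφD : φ Fq D = (A * (α - α')) ^ 2 := map_discrim_coeff_eq_sq (φ Fq) hmap
  have hDne : D ≠ 0 := by
    refine ne_of_apply_ne (φ Fq) ?_
    rw [hφD, map_zero]
    exact pow_ne_zero 2 <| mul_ne_zero ((map_ne_zero_iff _ φ_injective).mpr hmonic.ne_zero)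
      (sub_ne_zero.mpr hne)
  have hvD : v (φ Fq D) = (v A * v (α - α')) ^ 2 := by
    rw [hφD, ← hv.map_mul]
    exact map_pow hv.toAbsoluteValue _ 2
  refine inv_le_and_le_of_sq_mul_mem_Icc (x := v A) ?_ ?_ (hv.nonneg _) ⟨?_, ?_⟩
  · rw [hv.apply_φ]; exact one_le_kabs_polyToK hmonic.ne_zero
  · rw [hv.apply_φ]; exact kabs_polyToK_coeff_le_Hpoly P P.natDegree
  · rw [← hvD, hv.apply_φ]; exact one_le_kabs_polyToK hDne
  · rw [← hvD]; exact hv.apply_φ_discrim_le_sq P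

end Ooto
end
end

section
/- Let a = (a_n)_{n≥1} be an infinite sequence over a finite set A. Assume there exist integers κ ≥ 2 and n_0 ≥ 1 such that p(a, n) ≤ κn for all n ≥ n_0. Then for each n ≥ n_0 there exist finite words U_n, V_n over A (V_n nonempty) and a positive rational number w_n such that: (i) U_n V_n^{w_n} is a prefix of a; (ii) |U_n| ≤ 2κ|V_n|; (iii) n/2 ≤ |V_n| ≤ κn; (iv) if U_n is nonempty, then the last letter of U_n differs from the last letter of V_n; (v) |U_n V_n^{w_n}|/|U_n V_n| ≥ 1 + 1/(4κ+2); (vi) |U_n V_n| ≤ (κ+1)n − 1; (vii) |U_n U_n V_n| ≤ (2κ+1)n − 2. -/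
open Polynomial Filter
open scoped ENNReal

noncomputable section

namespace Ooto

variable (Fq : Type) [Field Fq] [Fintype Fq]

/-!
Among the `κn + 1` factors of length `n` of `b` starting at positions `0, …, κn`, two coincide,
at positions `i₀ < i₀ + t ≤ κn`; so `b` has period `t` on `[i₀, i₀ + n + t)`. Extend this
periodic stretch to the left as far as possible, to a start `i` with `b (i - 1) ≠ b (i - 1 + t)`
when `i > 0`, and take `U = b[0, i)` and for `V` the factor at `i` whose length `L` is the least
multiple of `t` with `n ≤ 2L`, so that `U V^w = b[0, i₀ + n + t)`. The last letter of `V` is then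
`b (i - 1 + t)`, which gives (iv); everything else is arithmetic from `i ≤ i₀`, `i₀ + t ≤ κn` and
`n ≤ 2L < n + 2t`.
-/

variable {A : Type*}

def HasPeriodOn (b : ℕ → A) (t i j : ℕ) : Prop :=
  ∀ m, i ≤ m → m + t < j → b m = b (m + t)

namespace HasPeriodOn

variable {b : ℕ → A} {t i j : ℕ}

theorem mul (h : HasPeriodOn b t i j) (k : ℕ) : HasPeriodOn b (k * t) i j := by
  induction k with
  | zero => simp [HasPeriodOn]
  | succ k ih =>
    intro m hm hmj
    rw [ih m hm (by nlinarith), h (m + k * t) (by omega) (by nlinarith)]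
    ring_nf

theorem of_dvd (h : HasPeriodOn b t i j) {s : ℕ} (hs : t ∣ s) : HasPeriodOn b s i j := by
  obtain ⟨k, rfl⟩ := hs
  simpa [mul_comm] using h.mul k

theorem exists_minimal_start (h : HasPeriodOn b t i j) :
    ∃ i' ≤ i, HasPeriodOn b t i' j ∧ (0 < i' → b (i' - 1) ≠ b (i' - 1 + t)) := by
  classical
  have hex : ∃ i', HasPeriodOn b t i' j := ⟨i, h⟩
  refine ⟨Nat.find hex, Nat.find_min' hex h, Nat.find_spec hex, fun hpos heq => ?_⟩
  refine Nat.find_min hex (m := Nat.find hex - 1) (by omega) fun m hm hmj => ?_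
  rcases hm.eq_or_lt with rfl | hlt
  · exact heq
  · exact Nat.find_spec hex m (by omega) hmj

end HasPeriodOn

theorem exists_hasPeriodOn_of_complexity_le {b : ℕ → A} {n N : ℕ} (h : complexity b n ≤ N) :
    ∃ p t, 0 < t ∧ p + t ≤ N ∧ HasPeriodOn b t p (p + n + t) := by
  let f : Fin (N + 1) → Fin n → A := fun p k => b (p + k)
  have hf : ¬ f.Injective := fun hinj => by
    have hsub : Set.range f ⊆ {w : Fin n → A | ∃ i : ℕ, ∀ k : Fin n, w k = b (i + k)} :=
      Set.range_subset_iff.2 fun p => ⟨p, fun k => rfl⟩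
    have hle := (hinj.encard_range.trans (Set.encard_mono hsub)).trans h
    rw [ENat.card_eq_coe_fintype_card, Fintype.card_fin] at hle
    exact absurd (ENat.natCast_le_natCast.1 hle) (by omega)
  obtain ⟨p, q, hfpq, hpq⟩ := Function.not_injective_iff.1 hf
  wlog hlt : p < q generalizing p q
  · exact this q p hfpq.symm hpq.symm (lt_of_le_of_ne (not_lt.1 hlt) (Ne.symm hpq))
  refine ⟨p, q - p, by omega, by omega, fun m hm hmj => ?_⟩
  have := congrFun hfpq ⟨m - p, by omega⟩
  simp only [f] at this
  convert this using 2 <;> omega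

theorem exists_least_multiple_ge_half (n : ℕ) {t : ℕ} (ht : 0 < t) (hn : 0 < n) :
    ∃ L, t ∣ L ∧ n ≤ 2 * L ∧ 2 * L < n + 2 * t ∧ (L = t ∨ L < n) := by
  obtain ⟨k, hk⟩ : ∃ k, k = (n + 2 * t - 1) / (2 * t) := ⟨_, rfl⟩
  have hdm : 2 * (t * k) + (n + 2 * t - 1) % (2 * t) = n + 2 * t - 1 := by
    rw [hk, ← mul_assoc, Nat.div_add_mod]
  have hmod := Nat.mod_lt (n + 2 * t - 1) (by omega : 0 < 2 * t)
  refine ⟨t * k, dvd_mul_right _ _, by omega, by omega, ?_⟩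
  rcases (by omega : k = 0 ∨ k = 1 ∨ 2 ≤ k) with rfl | rfl | hk2
  · omega
  · simp
  · have : 2 * t ≤ t * k := by nlinarith
    omega

def factorAt (b : ℕ → A) (i L : ℕ) : List A := (List.range L).map fun m => b (i + m)

section factorAt

variable (b : ℕ → A)

@[simp] theorem length_factorAt (i L : ℕ) : (factorAt b i L).length = L := by
  simp [factorAt]

theorem factorAt_add (i L L' : ℕ) :
    factorAt b i (L + L') = factorAt b i L ++ factorAt b (i + L) L' := by
  simp only [factorAt, List.range_add, List.map_append, List.map_map]
  congr 1
  exact List.map_congr_left fun m _ => by simp [Nat.add_assoc]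

theorem take_factorAt {i L r : ℕ} (hr : r ≤ L) : (factorAt b i L).take r = factorAt b i r := by
  rw [factorAt, ← List.map_take, List.take_range, Nat.min_eq_left hr, factorAt]

theorem isPrefixOfSeq_factorAt_zero (N : ℕ) : IsPrefixOfSeq (factorAt b 0 N) b := by
  intro k hk
  simp [factorAt]

theorem getLast?_factorAt {i L : ℕ} (hL : 0 < L) :
    (factorAt b i L).getLast? = some (b (i + (L - 1))) := by
  rw [List.getLast?_eq_getElem?, length_factorAt, factorAt, List.getElem?_map,
    List.getElem?_range (by omega)]
  rfl

end factorAt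

theorem wordPow_natCast_div_length {V : List A} (hV : V ≠ []) (M : ℕ) :
    wordPow V ((M : ℝ) / V.length) =
      (List.replicate (M / V.length) V).flatten ++ V.take (M % V.length) := by
  have hV : (V.length : ℝ) ≠ 0 := by simpa using hV
  have hfloor : ⌊(M : ℝ) / V.length⌋₊ = M / V.length := by
    rw [Nat.floor_div_natCast, Nat.floor_natCast]
  have hfrac : ((M : ℝ) / V.length - (M / V.length : ℕ)) * V.length = (M % V.length : ℕ) := by
    have := congrArg (Nat.cast : ℕ → ℝ) (Nat.div_add_mod M V.length)
    push_cast at this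
    field_simp
    linarith
  rw [wordPow, hfloor, hfrac, Nat.ceil_natCast]

theorem flatten_replicate_factorAt_append_take {b : ℕ → A} {i L M : ℕ}
    (h : HasPeriodOn b L i (i + M)) {c r : ℕ} (hcr : c * L + r ≤ M) (hr : r ≤ L) :
    (List.replicate c (factorAt b i L)).flatten ++ (factorAt b i L).take r =
      factorAt b i (c * L + r) := by
  induction c with
  | zero => simp [take_factorAt b hr]
  | succ c ih =>
    rw [List.replicate_succ, List.flatten_cons, List.append_assoc, ih (by nlinarith),
      show (c + 1) * L + r = L + (c * L + r) by ring, factorAt_add b i L (c * L + r)]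
    congr 1
    refine List.map_congr_left fun m hm => ?_
    rw [List.mem_range] at hm
    rw [h (i + m) (by omega) (by nlinarith)]
    ring_nf

theorem wordPow_factorAt {b : ℕ → A} {i L M : ℕ} (h : HasPeriodOn b L i (i + M)) (hL : 0 < L) :
    wordPow (factorAt b i L) ((M : ℝ) / L) = factorAt b i M := by
  have hV : factorAt b i L ≠ [] := by simpa [← List.length_pos_iff] using hL
  have hrepr := wordPow_natCast_div_length hV M
  rw [length_factorAt] at hrepr
  rw [hrepr, flatten_replicate_factorAt_append_take h (Nat.div_add_mod' M L).le
    (Nat.mod_lt M hL).le, Nat.div_add_mod']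

theorem getLast?_factorAt_ne_of_hasPeriodOn {b : ℕ → A} {t i j L : ℕ} (h : HasPeriodOn b t i j)
    (hi : 0 < i) (hstart : b (i - 1) ≠ b (i - 1 + t)) (htL : t ∣ L) (hL : 0 < L)
    (hLj : i + L ≤ j) : (factorAt b 0 i).getLast? ≠ (factorAt b i L).getLast? := by
  rw [getLast?_factorAt b hi, getLast?_factorAt b hL, zero_add, Ne, Option.some_inj]
  have ht : 0 < t := Nat.pos_of_dvd_of_pos htL hL
  have htL' : t ≤ L := Nat.le_of_dvd hL htL
  have hwrap := h.of_dvd (Nat.dvd_sub htL dvd_rfl) (i - 1 + t) (by omega) (by omega)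
  rw [show i - 1 + t + (L - t) = i + (L - 1) by omega] at hwrap
  exact fun hlast => hstart (hlast.trans hwrap.symm)

theorem stmt18_general {A : Type} (b : ℕ → A) (κ n₀ : ℕ)
    (hcomp : ∀ n : ℕ, n₀ ≤ n → complexity b n ≤ ((κ * n : ℕ) : ℕ∞)) :
    ∀ n : ℕ, n₀ ≤ n → ∃ (U V : List A) (w : ℚ), 0 < w ∧ V ≠ [] ∧
      IsPrefixOfSeq (U ++ wordPow V (w : ℝ)) b ∧
      U.length ≤ 2 * κ * V.length ∧
      n ≤ 2 * V.length ∧ V.length ≤ κ * n ∧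
      (U ≠ [] → U.getLast? ≠ V.getLast?) ∧
      (4 * κ + 3) * (U.length + V.length) ≤
        (4 * κ + 2) * (U.length + (wordPow V (w : ℝ)).length) ∧
      U.length + V.length + 1 ≤ (κ + 1) * n ∧
      2 * U.length + V.length + 2 ≤ (2 * κ + 1) * n := by
  intro n hn
  obtain ⟨i₀, t, ht, hi₀t, hper₀⟩ := exists_hasPeriodOn_of_complexity_le (hcomp n hn)
  obtain ⟨i, hii₀, hper, hstart⟩ := hper₀.exists_minimal_start
  have hnpos : 0 < n := Nat.pos_of_ne_zero fun h => by simp [h] at hi₀t; omega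
  have hκ : 0 < κ := Nat.pos_of_ne_zero fun h => by simp [h] at hi₀t; omega
  obtain ⟨L, htL, hnL, hLn, hL⟩ := exists_least_multiple_ge_half n ht hnpos
  obtain ⟨M, hM⟩ : ∃ M, i + M = i₀ + n + t := ⟨i₀ + n + t - i, by omega⟩
  have hW : wordPow (factorAt b i L) ((M / L : ℚ) : ℝ) = factorAt b i M := by
    push_cast
    exact wordPow_factorAt (hM ▸ hper.of_dvd htL) (by omega)
  refine ⟨factorAt b 0 i, factorAt b i L, M / L, ?_, ?_, ?_, ?_, ?_, ?_, ?_, ?_, ?_, ?_⟩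
  · exact div_pos (by exact_mod_cast (by omega : 0 < M)) (by exact_mod_cast (by omega : 0 < L))
  · rw [← List.length_pos_iff, length_factorAt]; omega
  · rw [hW]
    simpa [factorAt_add] using isPrefixOfSeq_factorAt_zero b (i + M)
  · simp only [length_factorAt]; nlinarith
  · simpa only [length_factorAt]
  · simp only [length_factorAt]; rcases hL with rfl | hL <;> nlinarith
  · intro hU
    have hi : 0 < i := List.length_pos_iff.2 hU |>.trans_eq (length_factorAt b 0 i)
    exact getLast?_factorAt_ne_of_hasPeriodOn hper hi (hstart hi) htL (by omega) (by omega)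
  · simp only [hW, length_factorAt]; nlinarith
  · simp only [length_factorAt]; nlinarith
  · simp only [length_factorAt]; nlinarith

theorem stmt18 {A : Type} (b : ℕ → A) (κ n₀ : ℕ) (hκ : 2 ≤ κ) (hn₀ : 1 ≤ n₀)
    (hcomp : ∀ n : ℕ, n₀ ≤ n → complexity b n ≤ ((κ * n : ℕ) : ℕ∞)) :
    ∀ n : ℕ, n₀ ≤ n → ∃ (U V : List A) (w : ℚ), 0 < w ∧ V ≠ [] ∧
      IsPrefixOfSeq (U ++ wordPow V (w : ℝ)) b ∧
      U.length ≤ 2 * κ * V.length ∧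
      n ≤ 2 * V.length ∧ V.length ≤ κ * n ∧
      (U ≠ [] → U.getLast? ≠ V.getLast?) ∧
      (4 * κ + 3) * (U.length + V.length) ≤
        (4 * κ + 2) * (U.length + (wordPow V (w : ℝ)).length) ∧
      U.length + V.length + 1 ≤ (κ + 1) * n ∧
      2 * U.length + V.length + 2 ≤ (2 * κ + 1) * n :=
  stmt18_general b κ n₀ hcomp

end Ooto
end
end
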